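/- Fix R > 0 and an isotropic subspace V of R^{2n}. For all (z,t), (ζ,τ) ∈ 𝕍⊥ with Euclidean norm at most R, and for all w ∈ V, one has |z−ζ| + |t−τ| ≤ C(R) · ( |z+w−ζ| + |t−τ + ω(z,ζ)/2 − ω(z+ζ,w)/2|^{1/2} ), where C(R) is a constant depending only on R (and the dimension). Consequently, the identity map from (𝕍⊥, d_{V\H^n}) to (𝕍⊥, Euclidean metric) is locally Lipschitz. -/

import Mathlib

open scoped RealInnerProductSpace
open Module
noncomputable section

/-- `ℝ^{2n}` with Euclidean norm, coordinates paired as `(j,0) ↔ x_j`, `(j,1) ↔ y_j`. -/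
abbrev Z (n : ℕ) := EuclideanSpace ℝ (Fin n × Fin 2)

/-- the standard symplectic form -/
def symp {n : ℕ} (z w : Z n) : ℝ := ∑ j : Fin n, (z (j, 0) * w (j, 1) - z (j, 1) * w (j, 0))

/-- the Heisenberg group as a set -/
abbrev H (n : ℕ) := Z n × ℝ

/-- Heisenberg group law -/
def Hmul {n : ℕ} (p q : H n) : H n := (p.1 + q.1, p.2 + q.2 + symp p.1 q.1 / 2)

/-- Heisenberg inverse -/
def Hinv {n : ℕ} (p : H n) : H n := (-p.1, -p.2)

/-- Korányi norm -/
def Knorm {n : ℕ} (p : H n) : ℝ := (‖p.1‖ ^ 4 + 16 * p.2 ^ 2) ^ ((1 : ℝ)/4)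

/-- Korányi metric -/
def dK {n : ℕ} (p q : H n) : ℝ := Knorm (Hmul (Hinv q) p)

/-- Euclidean orthogonal projection onto `V`, as a map `Z n → Z n` -/
def projV {n : ℕ} (V : Submodule ℝ (Z n)) (z : Z n) : Z n := (V.orthogonalProjection z : Z n)

/-- `V` is isotropic when the symplectic form vanishes identically on it. -/
def Isotropic {n : ℕ} (V : Submodule ℝ (Z n)) : Prop :=
  ∀ a ∈ V, ∀ b ∈ V, symp a b = 0

/-- horizontal projection `P_𝕍` -/
def PV {n : ℕ} (V : Submodule ℝ (Z n)) (p : H n) : H n := (projV V p.1, 0)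

/-- right-coset vertical projection `P_{V⊥}^R (p) = P_𝕍(p)⁻¹ * p` -/
def PR {n : ℕ} (V : Submodule ℝ (Z n)) (p : H n) : H n := Hmul (Hinv (PV V p)) p

/-- the quotient distance on `𝕍⊥`, `d_{V\Hⁿ}(p,q) = inf_{g ∈ 𝕍} d(g*p, q)` -/
def dQ {n : ℕ} (V : Submodule ℝ (Z n)) (p q : H n) : ℝ :=
  ⨅ w : V, dK (Hmul ((w : Z n), 0) p) q

/-- Euclidean distance on `Hⁿ = ℝ^{2n} × ℝ` -/
def dE {n : ℕ} (p q : H n) : ℝ := Real.sqrt (‖p.1 - q.1‖ ^ 2 + (p.2 - q.2) ^ 2)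

/-!
Write `a = |z + w - ζ|` and `e = t - τ + ω(z,ζ)/2 - ω(z+ζ,w)/2`. Since `z - ζ ∈ V^⊥` and `w ∈ V`,
Pythagoras gives `|z - ζ| ≤ a` and `|w| ≤ a`, while `|ω(u,v)| ≤ |u||v|` bounds both symplectic
terms by `O(R) a`; hence `|t - τ| ≤ |e| + O(R) a`. On the ball, `|e| ≤ K(R) + R a`, and since
`|e| = (|e|^{1/2})²` this upgrades to `|e| ≤ (K(R) + 1) |e|^{1/2} + R a`, which is linear in the
two quantities of the right-hand side. For the Lipschitz bound, `(w,0)*p` and `q` are at Korányi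
distance at least half of `|z + w - ζ| + |e|^{1/2}`, and one takes the infimum over `w ∈ V`.
-/

section Symplectic

variable {n : ℕ}

lemma symp_self (z : Z n) : symp z z = 0 := by
  simp [symp, mul_comm]

lemma symp_antisymm (a b : Z n) : symp a b = -symp b a := by
  simp only [symp, ← Finset.sum_neg_distrib]
  exact Finset.sum_congr rfl fun j _ => by ring

lemma symp_neg_left (a b : Z n) : symp (-a) b = -symp a b := by
  simp only [symp, ← Finset.sum_neg_distrib]
  exact Finset.sum_congr rfl fun j _ => by simp only [PiLp.neg_apply]; ring

lemma symp_add_left (a b c : Z n) : symp (a + b) c = symp a c + symp b c := by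
  simp only [symp, ← Finset.sum_add_distrib]
  exact Finset.sum_congr rfl fun j _ => by simp only [PiLp.add_apply]; ring

lemma symp_add_right (a b c : Z n) : symp a (b + c) = symp a b + symp a c := by
  simp only [symp, ← Finset.sum_add_distrib]
  exact Finset.sum_congr rfl fun j _ => by simp only [PiLp.add_apply]; ring

lemma symp_sub_right (a b c : Z n) : symp a (b - c) = symp a b - symp a c := by
  simp only [symp, ← Finset.sum_sub_distrib]
  exact Finset.sum_congr rfl fun j _ => by simp only [PiLp.sub_apply]; ring

/-- The rotation `(x_j, y_j) ↦ (-y_j, x_j)`. -/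
def J (u : Z n) : Z n :=
  WithLp.toLp 2 fun p : Fin n × Fin 2 => if p.2 = 0 then -u (p.1, 1) else u (p.1, 0)

lemma inner_J_left (u v : Z n) : ⟪J u, v⟫ = symp u v := by
  simp only [PiLp.inner_apply, RCLike.inner_apply, conj_trivial, symp, Fintype.sum_prod_type,
    Fin.sum_univ_two, J]
  exact Finset.sum_congr rfl fun j _ => by simp; ring

lemma norm_J (u : Z n) : ‖J u‖ = ‖u‖ := by
  simp only [EuclideanSpace.norm_eq, Fintype.sum_prod_type, Fin.sum_univ_two, J]
  congr 1
  exact Finset.sum_congr rfl fun j _ => by simp; ring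

lemma abs_symp_le (u v : Z n) : |symp u v| ≤ ‖u‖ * ‖v‖ := by
  simpa only [inner_J_left, norm_J] using abs_real_inner_le_norm (J u) v

end Symplectic

section Heisenberg

variable {n : ℕ}

lemma Hmul_Hinv_Hmul (p q : H n) (w : Z n) :
    Hmul (Hinv q) (Hmul (w, 0) p) =
      (p.1 + w - q.1, p.2 - q.2 + symp p.1 q.1 / 2 - symp (p.1 + q.1) w / 2) := by
  simp only [Hmul, Hinv, Prod.mk.injEq]
  constructor
  · abel
  · rw [symp_neg_left, symp_add_right, symp_add_left, symp_antisymm w p.1,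
      symp_antisymm q.1 p.1, symp_antisymm q.1 w]
    ring

lemma Knorm_nonneg (p : H n) : 0 ≤ Knorm p := by
  unfold Knorm; positivity

lemma Knorm_pow_four (p : H n) : Knorm p ^ 4 = ‖p.1‖ ^ 4 + 16 * p.2 ^ 2 := by
  rw [Knorm, ← Real.rpow_natCast, ← Real.rpow_mul (by positivity)]
  norm_num

lemma norm_fst_le_Knorm (p : H n) : ‖p.1‖ ≤ Knorm p := by
  refine le_of_pow_le_pow_left₀ four_ne_zero (Knorm_nonneg p) ?_
  rw [Knorm_pow_four]
  nlinarith [sq_nonneg p.2]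

lemma sqrt_abs_snd_le_Knorm (p : H n) : |p.2| ^ (1 / 2 : ℝ) ≤ Knorm p := by
  refine le_of_pow_le_pow_left₀ four_ne_zero (Knorm_nonneg p) ?_
  rw [Knorm_pow_four, ← Real.rpow_natCast, ← Real.rpow_mul (abs_nonneg _)]
  norm_num
  nlinarith [pow_nonneg (norm_nonneg p.1) 4, sq_nonneg p.2]

lemma norm_add_sqrt_abs_le_two_mul_dK (p q : H n) (w : Z n) :
    ‖p.1 + w - q.1‖ + |p.2 - q.2 + symp p.1 q.1 / 2 - symp (p.1 + q.1) w / 2| ^ (1 / 2 : ℝ) ≤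
      2 * dK (Hmul (w, 0) p) q := by
  have h₁ := norm_fst_le_Knorm (Hmul (Hinv q) (Hmul (w, 0) p))
  have h₂ := sqrt_abs_snd_le_Knorm (Hmul (Hinv q) (Hmul (w, 0) p))
  rw [dK]
  rw [Hmul_Hinv_Hmul] at h₁ h₂ ⊢
  dsimp only at h₁ h₂
  linarith

lemma dE_zero_eq (z : Z n) (t : ℝ) : dE (z, t) 0 = √(‖z‖ ^ 2 + t ^ 2) := by
  simp [dE]

lemma norm_le_of_dE_zero_le {z : Z n} {t R : ℝ} (h : dE (z, t) 0 ≤ R) : ‖z‖ ≤ R ∧ |t| ≤ R := by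
  rw [dE_zero_eq] at h
  constructor
  · exact (Real.le_sqrt_of_sq_le (by nlinarith [sq_nonneg t])).trans h
  · rw [← Real.sqrt_sq_eq_abs]
    exact (Real.sqrt_le_sqrt (by nlinarith [sq_nonneg ‖z‖])).trans h

lemma dE_le_norm_add_abs (p q : H n) : dE p q ≤ ‖p.1 - q.1‖ + |p.2 - q.2| := by
  refine Real.sqrt_le_iff.2 ⟨by positivity, ?_⟩
  nlinarith [norm_nonneg (p.1 - q.1), abs_nonneg (p.2 - q.2), sq_abs (p.2 - q.2)]

end Heisenberg

lemma norm_le_norm_add_of_mem_orthogonal {E : Type*} [NormedAddCommGroup E]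
    [InnerProductSpace ℝ E] {V : Submodule ℝ E} {u w : E} (hu : u ∈ Vᗮ) (hw : w ∈ V) :
    ‖u‖ ≤ ‖u + w‖ ∧ ‖w‖ ≤ ‖u + w‖ := by
  have h := norm_add_sq_eq_norm_sq_add_norm_sq_real (real_inner_comm u w ▸ hu w hw)
  constructor <;> nlinarith [norm_nonneg u, norm_nonneg w, norm_nonneg (u + w)]

lemma sq_le_mul_add_of_sq_le_add {x K c : ℝ} (hx : 0 ≤ x) (hK : 0 ≤ K) (hc : 0 ≤ c)
    (h : x ^ 2 ≤ K + c) : x ^ 2 ≤ (K + 1) * x + c := by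
  rcases le_total x 1 with hx1 | hx1 <;> nlinarith

theorem norm_sub_add_abs_sub_le {n : ℕ} {V : Submodule ℝ (Z n)} {z ζ w : Z n} {t τ R : ℝ}
    (hz : z ∈ Vᗮ) (hζ : ζ ∈ Vᗮ) (hw : w ∈ V) (hzR : ‖z‖ ≤ R) (hζR : ‖ζ‖ ≤ R)
    (htR : |t| ≤ R) (hτR : |τ| ≤ R) :
    ‖z - ζ‖ + |t - τ| ≤
      (R ^ 2 + 3 * R + 3) *
        (‖z + w - ζ‖ + |t - τ + symp z ζ / 2 - symp (z + ζ) w / 2| ^ (1 / 2 : ℝ)) := by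
  set a := ‖z + w - ζ‖
  set e := t - τ + symp z ζ / 2 - symp (z + ζ) w / 2 with he_def
  set b := |e| ^ (1 / 2 : ℝ) with hb_def
  have hR : 0 ≤ R := (norm_nonneg z).trans hzR
  have ha : 0 ≤ a := norm_nonneg _
  have hb : 0 ≤ b := by positivity
  have hb_sq : b ^ 2 = |e| := by
    rw [hb_def, ← Real.sqrt_eq_rpow, Real.sq_sqrt (abs_nonneg e)]
  obtain ⟨hza, hwa⟩ : ‖z - ζ‖ ≤ a ∧ ‖w‖ ≤ a := by
    simpa only [a, sub_add_eq_add_sub] using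
      norm_le_norm_add_of_mem_orthogonal (Submodule.sub_mem _ hz hζ) hw
  have hω_near : |symp z ζ| ≤ R * a := calc
    |symp z ζ| = |symp z (ζ - z)| := by rw [symp_sub_right, symp_self, sub_zero]
    _ ≤ ‖z‖ * ‖ζ - z‖ := abs_symp_le _ _
    _ ≤ R * a := mul_le_mul hzR (norm_sub_rev z ζ ▸ hza) (norm_nonneg _) hR
  have hω_far : |symp z ζ| ≤ R * R :=
    (abs_symp_le z ζ).trans (mul_le_mul hzR hζR (norm_nonneg _) hR)
  have hω_w : |symp (z + ζ) w| ≤ 2 * R * a :=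
    (abs_symp_le _ _).trans <| mul_le_mul (by linarith [norm_add_le z ζ]) hwa (norm_nonneg _)
      (by positivity)
  obtain ⟨ht₁, ht₂⟩ := abs_le.mp htR
  obtain ⟨hτ₁, hτ₂⟩ := abs_le.mp hτR
  obtain ⟨hfar₁, hfar₂⟩ := abs_le.mp hω_far
  obtain ⟨hnear₁, hnear₂⟩ := abs_le.mp hω_near
  obtain ⟨hw₁, hw₂⟩ := abs_le.mp hω_w
  have he : |e| ≤ 2 * R + R ^ 2 / 2 + R * a := abs_le.mpr ⟨by linarith, by linarith⟩
  have hbe : |e| ≤ (2 * R + R ^ 2 / 2 + 1) * b + R * a := by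
    rw [← hb_sq] at he ⊢
    exact sq_le_mul_add_of_sq_le_add hb (by positivity) (by positivity) he
  have htτ : |t - τ| ≤ |e| + 3 * R * a / 2 :=
    abs_le.mpr ⟨by linarith [neg_abs_le e], by linarith [le_abs_self e]⟩
  -- The coefficients obtained, `1 + 5R/2` of `a` and `R²/2 + 2R + 1` of `b`, are both below
  -- `R² + 3R + 3`, which is positive for every `R`.
  nlinarith [mul_nonneg hR ha, mul_nonneg (sq_nonneg R) ha, mul_nonneg hR hb]

lemma le_mul_dQ {n : ℕ} {V : Submodule ℝ (Z n)} {p q : H n} {x C : ℝ} (hC : 0 ≤ C)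
    (h : ∀ w ∈ V, x ≤ C * dK (Hmul (w, 0) p) q) : x ≤ C * dQ V p q := by
  rw [dQ, Real.mul_iInf_of_nonneg hC]
  exact le_ciInf fun w => h w w.2

theorem quotient_to_euclidean_locally_lipschitz_general {n : ℕ} (R : ℝ) :
    ∃ C : ℝ, 0 < C ∧
      (∀ (V : Submodule ℝ (Z n)), Isotropic V →
        ∀ (z ζ : Z n) (t τ : ℝ), z ∈ Vᗮ → ζ ∈ Vᗮ →
          dE (z, t) 0 ≤ R → dE (ζ, τ) 0 ≤ R → ∀ w ∈ V,
            ‖z - ζ‖ + |t - τ| ≤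
              C * (‖z + w - ζ‖ +
                |t - τ + symp z ζ / 2 - symp (z + ζ) w / 2| ^ ((1 : ℝ)/2))) ∧
      (∀ (V : Submodule ℝ (Z n)), Isotropic V →
        ∀ p q : H n, p.1 ∈ Vᗮ → q.1 ∈ Vᗮ →
          dE p 0 ≤ R → dE q 0 ≤ R → dE p q ≤ C * dQ V p q) := by
  set C₀ := R ^ 2 + 3 * R + 3
  have hC₀ : 0 < C₀ := by nlinarith [sq_nonneg (R + 3 / 2)]
  refine ⟨2 * C₀, by positivity, ?_, ?_⟩
  · intro V _ z ζ t τ hz hζ hzR hζR w hw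
    obtain ⟨hz', ht'⟩ := norm_le_of_dE_zero_le hzR
    obtain ⟨hζ', hτ'⟩ := norm_le_of_dE_zero_le hζR
    refine (norm_sub_add_abs_sub_le hz hζ hw hz' hζ' ht' hτ').trans ?_
    exact mul_le_mul_of_nonneg_right (by linarith) (by positivity)
  · rintro V _ ⟨z, t⟩ ⟨ζ, τ⟩ hz hζ hzR hζR
    obtain ⟨hz', ht'⟩ := norm_le_of_dE_zero_le hzR
    obtain ⟨hζ', hτ'⟩ := norm_le_of_dE_zero_le hζR
    refine le_mul_dQ (by positivity) fun w hw => ?_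
    calc dE (z, t) (ζ, τ) ≤ ‖z - ζ‖ + |t - τ| := dE_le_norm_add_abs _ _
      _ ≤ C₀ * (‖z + w - ζ‖ + |t - τ + symp z ζ / 2 - symp (z + ζ) w / 2| ^ (1 / 2 : ℝ)) :=
        norm_sub_add_abs_sub_le hz hζ hw hz' hζ' ht' hτ'
      _ ≤ C₀ * (2 * dK (Hmul (w, 0) (z, t)) (ζ, τ)) :=
        mul_le_mul_of_nonneg_left (norm_add_sqrt_abs_le_two_mul_dK (z, t) (ζ, τ) w) hC₀.le
      _ = 2 * C₀ * dK (Hmul (w, 0) (z, t)) (ζ, τ) := by ring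

/-- For points of `𝕍⊥` of Euclidean norm at most `R` one has
`|z−ζ| + |t−τ| ≤ C(R) (|z+w−ζ| + |t−τ+ω(z,ζ)/2−ω(z+ζ,w)/2|^{1/2})` uniformly in `w ∈ V`;
consequently, the identity map from `(𝕍⊥, d_{V\Hⁿ})` to `(𝕍⊥, d_E)` is locally
Lipschitz (Lipschitz on every ball). -/
theorem quotient_to_euclidean_locally_lipschitz {n : ℕ} (R : ℝ) (hR : 0 < R) :
    ∃ C : ℝ, 0 < C ∧
      (∀ (V : Submodule ℝ (Z n)), Isotropic V →
        ∀ (z ζ : Z n) (t τ : ℝ), z ∈ Vᗮ → ζ ∈ Vᗮ →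
          dE (z, t) 0 ≤ R → dE (ζ, τ) 0 ≤ R → ∀ w ∈ V,
            ‖z - ζ‖ + |t - τ| ≤
              C * (‖z + w - ζ‖ +
                |t - τ + symp z ζ / 2 - symp (z + ζ) w / 2| ^ ((1 : ℝ)/2))) ∧
      (∀ (V : Submodule ℝ (Z n)), Isotropic V →
        ∀ p q : H n, p.1 ∈ Vᗮ → q.1 ∈ Vᗮ →
          dE p 0 ≤ R → dE q 0 ≤ R → dE p q ≤ C * dQ V p q) :=
  quotient_to_euclidean_locally_lipschitz_general R
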